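/- arXiv:2203.00681 — 2 statements merged into one kernel-verified Lean document; each statement's English description precedes it below -/
import Mathlib

section
/- There exist constants 0 < c ≤ C such that for all integers n ≥ 3 and k ≥ 2, the smallest positive eigenvalue of the Laplacian of the ring-of-cliques graph satisfies c/(n²k) ≤ λ_min^+(L(G_RC(n,k))) ≤ C/(n²k). -/
open Matrix

/-- The set of (real) eigenvalues of a matrix. -/
def eigSet {N : Type*} [Fintype N] (A : Matrix N N ℝ) : Set ℝ :=
  {μ | ∃ x : N → ℝ, x ≠ 0 ∧ A.mulVec x = μ • x}

/-- The largest eigenvalue of a matrix. -/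
noncomputable def lamMax {N : Type*} [Fintype N] (A : Matrix N N ℝ) : ℝ :=
  sSup (eigSet A)

/-- The smallest positive eigenvalue of a matrix. -/
noncomputable def lamMinPos {N : Type*} [Fintype N] (A : Matrix N N ℝ) : ℝ :=
  sInf {μ ∈ eigSet A | 0 < μ}

/-- The condition number `χ(A) = λ_max(A) / λ_min^+(A)`. -/
noncomputable def chi {N : Type*} [Fintype N] (A : Matrix N N ℝ) : ℝ :=
  lamMax A / lamMinPos A

/-- The ring-of-cliques graph `G_RC(n,k)`: `n` cliques of size `k`, whose `0`-th
vertices are connected in a ring. Vertex `(i, a)` is adjacent to `(j, b)` iff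
either `i = j` and `a ≠ b`, or `a = b = 0` and `j ≡ i ± 1 (mod n)`. -/
def ringClique (n k : ℕ) : SimpleGraph (Fin n × Fin k) where
  Adj v w := v ≠ w ∧ (v.1 = w.1 ∨
    (v.2.val = 0 ∧ w.2.val = 0 ∧
      (w.1.val = (v.1.val + 1) % n ∨ v.1.val = (w.1.val + 1) % n)))
  symm := ⟨by
    rintro v w ⟨hne, h⟩
    refine ⟨fun h' => hne h'.symm, ?_⟩
    rcases h with h | ⟨h1, h2, h3⟩
    · exact Or.inl h.symm
    · exact Or.inr ⟨h2, h1, h3.symm⟩⟩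
  loopless := ⟨fun v h => h.1 rfl⟩

instance (n k : ℕ) : DecidableRel (ringClique n k).Adj := fun v w =>
  decidable_of_iff (v ≠ w ∧ (v.1 = w.1 ∨
    (v.2.val = 0 ∧ w.2.val = 0 ∧
      (w.1.val = (v.1.val + 1) % n ∨ v.1.val = (w.1.val + 1) % n)))) Iff.rfl

/-!
An eigenvector of the Laplacian of `ringClique n k` with eigenvalue `μ ≠ k` is constant, say equal
to `z i`, on the non-hub vertices of clique `i`, and equals `(1 - μ) * z i` at its hub. The hub
equations then read `(1 - μ) Δz = μ (k - μ) z` for the Laplacian `Δ` of the `n`-cycle, so for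
`μ < 1` the vector `z` is an eigenvector of `Δ` with eigenvalue `ν = μ (k - μ) / (1 - μ)`.
For `μ < 1/2`, a discrete Poincaré inequality on the cycle gives `ν ≥ 1 / n²`, hence
`μ ≥ 1 / (2 n² k)`. Conversely, the Fourier mode `cos (2π i / n)` has
`ν = 2 - 2 cos (2π / n) ≤ 64 / n²`, and solving for `μ ∈ (0, 1)` gives an eigenvalue with `μ k ≤ ν`.
-/

open Finset Real

theorem SimpleGraph.lapMatrix_mulVec_apply_eq_sum {V R : Type*} [Fintype V] [DecidableEq V]
    [NonAssocRing R] (G : SimpleGraph V) [DecidableRel G.Adj] (x : V → R) (v : V) :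
    (G.lapMatrix R *ᵥ x) v = ∑ w, if G.Adj v w then x v - x w else 0 := by
  rw [lapMatrix_mulVec_apply, ← card_neighborFinset_eq_degree, ← nsmul_eq_mul,
    ← sum_const, ← sum_sub_distrib, neighborFinset_eq_filter, sum_filter]

section Cycle

variable {n : ℕ} [NeZero n]

theorem Fin.add_one_ne_sub_one (hn : 3 ≤ n) (i : Fin n) : i + 1 ≠ i - 1 := by
  rw [Ne, ← sub_eq_zero, show i + 1 - (i - 1) = 1 + 1 by abel, Fin.ext_iff, Fin.val_add,
    Fin.val_one', Nat.one_mod_eq_one.2 (by omega), Fin.val_zero, Nat.mod_eq_of_lt (by omega)]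
  omega

theorem Fin.two_mul_cos_sub_cos_sub_cos (i : Fin n) :
    2 * cos (2 * π * (i : ℕ) / n) - cos (2 * π * ((i + 1 : Fin n) : ℕ) / n)
      - cos (2 * π * ((i - 1 : Fin n) : ℕ) / n) =
      (2 - 2 * cos (2 * π / n)) * cos (2 * π * (i : ℕ) / n) := by
  set g : ℕ → ℝ := fun m => cos (2 * π * m / n) with hg
  have hn : (n : ℝ) ≠ 0 := Nat.cast_ne_zero.2 (NeZero.ne n)
  have hper : Function.Periodic g n := fun m => by
    simp only [hg, Nat.cast_add, mul_add, add_div, mul_div_cancel_right₀ _ hn, cos_add_two_pi]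
  have hmod {a b : ℕ} (h : a ≡ b [MOD n]) : g a = g b := by
    rw [← hper.map_mod_nat a, h, hper.map_mod_nat]
  have hsucc {a : Fin n} {m : ℕ} (h : ↑a ≡ m [MOD n]) : ↑(a + 1) ≡ m + 1 [MOD n] := by
    rw [Fin.val_add, Fin.val_one']
    exact (Nat.mod_modEq _ n).trans ((h.add (Nat.mod_modEq 1 n)))
  obtain ⟨j, rfl⟩ : ∃ j, i = j + 1 := ⟨i - 1, (sub_add_cancel i 1).symm⟩
  have h1 : ↑(j + 1) ≡ ↑j + 1 [MOD n] := hsucc rfl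
  change 2 * g ↑(j + 1) - g ↑(j + 1 + 1) - g ↑(j + 1 - 1) =
    (2 - 2 * cos (2 * π / n)) * g ↑(j + 1)
  rw [add_sub_cancel_right, hmod h1, hmod (hsucc h1)]
  set u : ℝ := 2 * π * ((j : ℕ) + 1 : ℕ) / n
  have hprev : g j = cos (u - 2 * π / n) := by simp only [hg, u]; push_cast; ring_nf
  have hnext : g (j + 1 + 1) = cos (u + 2 * π / n) := by simp only [hg, u]; push_cast; ring_nf
  rw [hprev, hnext, cos_add, cos_sub]
  ring

variable (z : Fin n → ℝ)

theorem Fin.sum_comp_add_one : ∑ i, z (i + 1) = ∑ i, z i :=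
  Equiv.sum_comp (Equiv.addRight (1 : Fin n)) z

theorem Fin.sum_comp_sub_one : ∑ i, z (i - 1) = ∑ i, z i :=
  Equiv.sum_comp (Equiv.subRight (1 : Fin n)) z

theorem Fin.sum_two_mul_sub_sub_eq_zero : ∑ i, (2 * z i - z (i + 1) - z (i - 1)) = 0 := by
  simp only [sum_sub_distrib, ← mul_sum, Fin.sum_comp_add_one, Fin.sum_comp_sub_one]
  ring

theorem Fin.sum_mul_two_mul_sub_sub :
    ∑ i, z i * (2 * z i - z (i + 1) - z (i - 1)) = ∑ i, (z (i + 1) - z i) ^ 2 := by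
  have hsq : ∑ i, z (i + 1) ^ 2 = ∑ i, z i ^ 2 := Fin.sum_comp_add_one (z · ^ 2)
  have hprod : ∑ i, z i * z (i - 1) = ∑ i, z (i + 1) * z i := by
    simpa using (Fin.sum_comp_add_one (fun i => z i * z (i - 1))).symm
  have h1 : ∑ i, z i * (2 * z i - z (i + 1) - z (i - 1)) =
      2 * ∑ i, z i ^ 2 - ∑ i, z (i + 1) * z i - ∑ i, z i * z (i - 1) := by
    simp only [mul_sum, ← sum_sub_distrib]
    exact sum_congr rfl fun i _ => by ring
  have h2 : ∑ i, (z (i + 1) - z i) ^ 2 =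
      ∑ i, z (i + 1) ^ 2 - 2 * ∑ i, z (i + 1) * z i + ∑ i, z i ^ 2 := by
    simp only [mul_sum, ← sum_sub_distrib, ← sum_add_distrib]
    exact sum_congr rfl fun i _ => by ring
  rw [h1, h2, hsq, hprod]
  ring

open Fin.NatCast in
theorem Fin.sq_sub_le_mul_sum_sq_sub (i : Fin n) :
    (z i - z 0) ^ 2 ≤ n * ∑ j, (z (j + 1) - z j) ^ 2 := by
  set w : ℕ → ℝ := fun t => z (t : Fin n)
  have hpath : z i - z 0 = ∑ t ∈ range i, (w (t + 1) - w t) := by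
    rw [sum_range_sub]
    simp [w]
  have hloop : ∑ j, (z (j + 1) - z j) ^ 2 = ∑ t ∈ range n, (w (t + 1) - w t) ^ 2 := by
    rw [← Fin.sum_univ_eq_sum_range]
    simp [w]
  calc (z i - z 0) ^ 2 ≤ (i : ℕ) * ∑ t ∈ range i, (w (t + 1) - w t) ^ 2 := by
        simpa [hpath] using sq_sum_le_card_mul_sum_sq (s := range i) (f := fun t => w (t + 1) - w t)
    _ ≤ n * ∑ t ∈ range n, (w (t + 1) - w t) ^ 2 := by
        gcongr ?_ * ?_
        · exact_mod_cast i.is_lt.le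
        · exact sum_le_sum_of_subset_of_nonneg (range_subset_range.2 i.is_lt.le)
            fun _ _ _ => sq_nonneg _
    _ = n * ∑ j, (z (j + 1) - z j) ^ 2 := by rw [hloop]

theorem Fin.sum_sq_le_sq_mul_sum_sq_sub (hz : ∑ i, z i = 0) :
    ∑ i, z i ^ 2 ≤ n ^ 2 * ∑ i, (z (i + 1) - z i) ^ 2 := by
  have hcentre : ∑ i, (z i - z 0) ^ 2 = ∑ i, z i ^ 2 + n * z 0 ^ 2 := by
    simp only [sub_sq, sum_add_distrib, sum_sub_distrib, ← sum_mul, ← mul_sum, hz, sum_const,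
      nsmul_eq_mul]
    ring
  calc ∑ i, z i ^ 2 ≤ ∑ i, (z i - z 0) ^ 2 := hcentre ▸ le_add_of_nonneg_right (by positivity)
    _ ≤ ∑ _i : Fin n, n * ∑ j, (z (j + 1) - z j) ^ 2 :=
        sum_le_sum fun i _ => Fin.sq_sub_le_mul_sum_sq_sub z i
    _ = n ^ 2 * ∑ i, (z (i + 1) - z i) ^ 2 := by
        simp only [sum_const, nsmul_eq_mul]
        ring

theorem Fin.one_div_sq_le_of_two_mul_sub_sub_eq_mul {ν : ℝ} (hz : z ≠ 0) (hν : ν ≠ 0)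
    (heig : ∀ i, 2 * z i - z (i + 1) - z (i - 1) = ν * z i) : 1 / (n : ℝ) ^ 2 ≤ ν := by
  have hsum : ∑ i, z i = 0 := by
    have := Fin.sum_two_mul_sub_sub_eq_zero z
    simp only [heig, ← mul_sum] at this
    exact (mul_eq_zero.1 this).resolve_left hν
  have henergy : ν * ∑ i, z i ^ 2 = ∑ i, (z (i + 1) - z i) ^ 2 := by
    rw [← Fin.sum_mul_two_mul_sub_sub, mul_sum]
    exact sum_congr rfl fun i _ => by rw [heig]; ring
  have hQ : 0 < ∑ i, z i ^ 2 := by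
    obtain ⟨i, hi⟩ := Function.ne_iff.1 hz
    exact sum_pos' (fun j _ => sq_nonneg _) ⟨i, mem_univ _, pow_two_pos_of_ne_zero hi⟩
  have hpoinc := Fin.sum_sq_le_sq_mul_sum_sq_sub z hsum
  rw [← henergy] at hpoinc
  have hn : (0 : ℝ) < n := by exact_mod_cast Nat.pos_of_neZero n
  rw [div_le_iff₀ (by positivity)]
  nlinarith

end Cycle

theorem le_lamMinPos {N : Type*} [Fintype N] {A : Matrix N N ℝ} {c : ℝ}
    (hne : ∃ μ ∈ eigSet A, 0 < μ) (h : ∀ μ ∈ eigSet A, 0 < μ → c ≤ μ) : c ≤ lamMinPos A :=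
  le_csInf hne fun μ hμ => h μ hμ.1 hμ.2

theorem lamMinPos_le {N : Type*} [Fintype N] {A : Matrix N N ℝ} {μ : ℝ} (hμ : μ ∈ eigSet A)
    (hpos : 0 < μ) : lamMinPos A ≤ μ :=
  csInf_le ⟨0, fun _ h => h.2.le⟩ ⟨hμ, hpos⟩

namespace ringClique

variable {n k : ℕ} [NeZero k]

def extend (μ : ℝ) (z : Fin n → ℝ) : Fin n × Fin k → ℝ :=
  fun v => if v.2 = 0 then (1 - μ) * z v.1 else z v.1

theorem sum_extend (μ : ℝ) (z : Fin n → ℝ) (i : Fin n) :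
    ∑ b : Fin k, extend μ z (i, b) = (k - μ) * z i := by
  have h : ∀ b : Fin k, extend μ z (i, b) = z i - if b = 0 then μ * z i else 0 := by
    intro b
    simp only [extend]
    split_ifs <;> ring
  simp only [h, sum_sub_distrib, Fintype.sum_ite_eq', sum_const, card_univ, Fintype.card_fin,
    nsmul_eq_mul]
  ring

variable [NeZero n]

theorem adj_iff (i j : Fin n) (a b : Fin k) :
    (ringClique n k).Adj (i, a) (j, b) ↔
      (i, a) ≠ (j, b) ∧ (i = j ∨ a = 0 ∧ b = 0 ∧ (j = i + 1 ∨ j = i - 1)) := by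
  rw [eq_sub_iff_add_eq (a := j), eq_comm (a := j + 1)]
  simp only [ringClique, Fin.val_eq_zero_iff, Fin.ext_iff (a := j), Fin.ext_iff (a := i),
    Fin.val_add, Fin.val_one', Nat.add_mod_mod]

theorem lapMatrix_mulVec_apply (hn : 3 ≤ n) (x : Fin n × Fin k → ℝ) (i : Fin n) (a : Fin k) :
    ((ringClique n k).lapMatrix ℝ *ᵥ x) (i, a) = k * x (i, a) - ∑ b, x (i, b) +
      if a = 0 then 2 * x (i, 0) - x (i + 1, 0) - x (i - 1, 0) else 0 := by
  have hsucc : i + 1 ≠ i := by simpa using (show n ≠ 1 by omega)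
  have hpred : i - 1 ≠ i := by simpa using (show n ≠ 1 by omega)
  have hsp : i + 1 ≠ i - 1 := Fin.add_one_ne_sub_one hn i
  have hsplit : ∀ w : Fin n × Fin k, (if (ringClique n k).Adj (i, a) w then x (i, a) - x w else 0)
      = (if w.1 = i then x (i, a) - x w else 0) + if a = 0 then
        (if w = (i + 1, 0) then x (i, a) - x w else 0) +
        (if w = (i - 1, 0) then x (i, a) - x w else 0) else 0 := by
    rintro ⟨j, b⟩
    rcases eq_or_ne j i with rfl | hj
    · rcases eq_or_ne a b with rfl | hab
      · simp
      · simp [adj_iff, hab, hsucc.symm, hpred.symm]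
    · by_cases ha : a = 0
      · subst ha
        by_cases hb : b = 0
        · subst hb
          by_cases h1 : j = i + 1
          · subst h1; simp [adj_iff, hsp, show n ≠ 1 by omega]
          · simp [adj_iff, hj, h1, Ne.symm hj]
        · simp [adj_iff, hb, hj, Ne.symm hj]
      · simp [adj_iff, ha, hj, Ne.symm hj]
  rw [SimpleGraph.lapMatrix_mulVec_apply_eq_sum]
  simp only [hsplit, sum_add_distrib]
  congr 1
  · simp only [Fintype.sum_prod_type_right, Fintype.sum_ite_eq', sum_sub_distrib, sum_const,
      card_univ, Fintype.card_fin, nsmul_eq_mul]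
  · by_cases ha : a = 0
    · simp only [ha, if_true, sum_add_distrib, Fintype.sum_ite_eq']
      ring
    · simp only [ha, if_false, sum_const_zero]

theorem lapMatrix_mulVec_extend_eq_smul_iff (hn : 3 ≤ n) (μ : ℝ) (z : Fin n → ℝ) :
    (ringClique n k).lapMatrix ℝ *ᵥ extend μ z = μ • extend μ z ↔
      ∀ i, (1 - μ) * (2 * z i - z (i + 1) - z (i - 1)) = μ * (k - μ) * z i := by
  simp only [funext_iff, Prod.forall, lapMatrix_mulVec_apply hn, sum_extend, Pi.smul_apply,
    smul_eq_mul]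
  constructor
  · intro h i
    have := h i 0
    simp only [extend, if_true] at this
    linarith
  · intro h i a
    by_cases ha : a = 0
    · simp only [extend, ha, if_true]
      linarith [h i]
    · simp only [extend, ha, if_false]
      ring

theorem eq_extend_of_lapMatrix_mulVec_eq_smul (hn : 3 ≤ n) {μ : ℝ} (hμ : μ ≠ k)
    {x : Fin n × Fin k → ℝ} (hx : (ringClique n k).lapMatrix ℝ *ᵥ x = μ • x) :
    x = extend μ (fun i => (∑ b, x (i, b)) / (k - μ)) := by
  set z : Fin n → ℝ := fun i => (∑ b, x (i, b)) / (k - μ) with hz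
  have hkμ : (k : ℝ) - μ ≠ 0 := sub_ne_zero.2 (Ne.symm hμ)
  have hrow (i : Fin n) (a : Fin k) := congrFun hx (i, a)
  simp only [lapMatrix_mulVec_apply hn, Pi.smul_apply, smul_eq_mul] at hrow
  have hleaf : ∀ i a, a ≠ 0 → x (i, a) = z i := by
    intro i a ha
    have := hrow i a
    simp only [ha, if_false, add_zero] at this
    rw [hz, eq_div_iff hkμ]
    linarith
  ext ⟨i, a⟩
  by_cases ha : a = 0
  · -- both sides have the same clique sum and agree off the hub
    have hsum : ∑ b, x (i, b) = ∑ b : Fin k, extend μ z (i, b) := by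
      rw [sum_extend, hz, mul_div_cancel₀ _ hkμ]
    rw [Fintype.sum_eq_add_sum_compl 0, Fintype.sum_eq_add_sum_compl 0 (fun b => extend μ z (i, b)),
      sum_congr rfl fun b hb => ?_] at hsum
    · rw [ha]
      exact add_right_cancel hsum
    · have hb : b ≠ 0 := by simpa using hb
      simp [extend, hb, hleaf i b hb]
  · simp [extend, ha, hleaf i a ha]

theorem le_of_mem_eigSet_of_pos (hn : 3 ≤ n) {μ : ℝ}
    (hμ : μ ∈ eigSet ((ringClique n k).lapMatrix ℝ)) (hpos : 0 < μ) :
    1 / 2 / ((n : ℝ) ^ 2 * k) ≤ μ := by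
  obtain ⟨x, hx0, hx⟩ := hμ
  have hn1 : (1 : ℝ) ≤ n := by exact_mod_cast NeZero.one_le
  have hk1 : (1 : ℝ) ≤ k := by exact_mod_cast NeZero.one_le
  have hnk : 1 ≤ (n : ℝ) ^ 2 * k := one_le_mul_of_one_le_of_one_le (one_le_pow₀ hn1) hk1
  rcases le_or_gt (1 / 2) μ with hbig | hsmall
  · exact (div_le_self (by norm_num) hnk).trans hbig
  set z : Fin n → ℝ := fun i => (∑ b, x (i, b)) / (k - μ)
  have hxz : x = extend μ z := eq_extend_of_lapMatrix_mulVec_eq_smul hn (by linarith) hx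
  have hz0 : z ≠ 0 := by
    rintro h
    apply hx0
    ext v
    simp [hxz, h, extend]
  have h1μ : 0 < 1 - μ := by linarith
  have hkμ : 0 < (k : ℝ) - μ := by linarith
  have hcycle := (lapMatrix_mulVec_extend_eq_smul_iff hn μ z).1 (hxz ▸ hx)
  have hν := Fin.one_div_sq_le_of_two_mul_sub_sub_eq_mul z hz0 (ν := μ * (k - μ) / (1 - μ))
    (div_pos (mul_pos hpos hkμ) h1μ).ne'
    (fun i => by rw [div_mul_eq_mul_div, eq_div_iff h1μ.ne', mul_comm, hcycle i])
  rw [div_le_div_iff₀ (by positivity) h1μ] at hν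
  rw [div_div, div_le_iff₀ (by positivity)]
  nlinarith

theorem exists_pos_mem_eigSet_le (hn : 3 ≤ n) (hk : 2 ≤ k) :
    ∃ μ ∈ eigSet ((ringClique n k).lapMatrix ℝ), 0 < μ ∧ μ ≤ 64 / ((n : ℝ) ^ 2 * k) := by
  have hn3 : (3 : ℝ) ≤ n := by exact_mod_cast hn
  have hk2 : (2 : ℝ) ≤ k := by exact_mod_cast hk
  set θ : ℝ := 2 * π / n with hθ
  set s : ℝ := 2 - 2 * cos θ
  have hθpos : 0 < θ := by positivity
  have hθπ : θ ≤ π := by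
    rw [hθ, div_le_iff₀ (by positivity)]
    nlinarith [pi_pos]
  have hspos : 0 < s := by
    have := cos_lt_cos_of_nonneg_of_le_pi le_rfl hθπ hθpos
    rw [cos_zero] at this
    linarith
  have hsθ : s ≤ 64 / (n : ℝ) ^ 2 := by
    have hθsq : θ ^ 2 * (n : ℝ) ^ 2 = (2 * π) ^ 2 := by
      rw [hθ, div_pow, div_mul_cancel₀ _ (by positivity)]
    rw [le_div_iff₀ (by positivity)]
    nlinarith [one_sub_sq_div_two_le_cos (x := θ), pi_le_four, pi_pos]
  obtain ⟨μ, ⟨hμ0, hμ1⟩, hroot⟩ : ∃ μ ∈ Set.Ioo (0 : ℝ) 1, μ * (k - μ) - s * (1 - μ) = 0 :=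
    intermediate_value_Ioo zero_le_one (by fun_prop) ⟨by linarith, by linarith⟩
  set z : Fin n → ℝ := fun i => cos (2 * π * (i : ℕ) / n)
  refine ⟨μ, ⟨extend μ z, fun h => ?_, ?_⟩, hμ0, ?_⟩
  · have h00 : extend μ z ((0 : Fin n), (0 : Fin k)) = 1 - μ := by simp [extend, z]
    have := congrFun h (0, 0)
    rw [h00, Pi.zero_apply] at this
    linarith
  · refine (lapMatrix_mulVec_extend_eq_smul_iff hn μ z).2 fun i => ?_
    rw [Fin.two_mul_cos_sub_cos_sub_cos]
    linear_combination (-z i) * hroot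
  · have hμs : μ ≤ s := by nlinarith
    have hμk : μ * k ≤ s := by nlinarith
    rw [le_div_iff₀ (by positivity)] at hsθ ⊢
    nlinarith

end ringClique

theorem lamMinPos_ringClique_order :
    ∃ c C : ℝ, 0 < c ∧ c ≤ C ∧ ∀ n k : ℕ, 3 ≤ n → 2 ≤ k →
      c / ((n : ℝ) ^ 2 * (k : ℝ)) ≤ lamMinPos ((ringClique n k).lapMatrix ℝ) ∧
      lamMinPos ((ringClique n k).lapMatrix ℝ) ≤ C / ((n : ℝ) ^ 2 * (k : ℝ)) := by
  refine ⟨1 / 2, 64, by norm_num, by norm_num, fun n k hn hk => ?_⟩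
  have : NeZero n := ⟨by omega⟩
  have : NeZero k := ⟨by omega⟩
  obtain ⟨μ, hμ, hpos, hle⟩ := ringClique.exists_pos_mem_eigSet_le hn hk
  exact ⟨le_lamMinPos ⟨μ, hμ, hpos⟩ fun ν hν hνpos =>
      ringClique.le_of_mem_eigSet_of_pos hn hν hνpos, (lamMinPos_le hμ hpos).trans hle⟩
end

section
/- For all integers n ≥ 3 and k ≥ 2, the largest eigenvalue of the Laplacian of the ring-of-cliques graph satisfies k ≤ λ_max(L(G_RC(n,k))) ≤ k + 4. -/
open Matrix

/-!
Call the vertices `(i, 0)` hubs. The edges of `G_RC(n,k)` split into `n` disjoint copies of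
`K_k` (the box product `⊥ □ ⊤`) and the ring through the hubs, a graph of maximum degree `2`.
The Laplacian quadratic form is subadditive over such a split; it is at most `k‖x‖²` on
disjoint copies of `K_k` and at most `2Δ‖x‖²` on a graph of maximum degree `Δ`, so every
eigenvalue is at most `k + 4`. Conversely, the vector equal to `1 - k` at hubs and `1` elsewhere
sums to zero on every clique and is constant along ring edges, so it is an eigenvector of the
clique Laplacian, and hence of `L(G_RC(n,k))`, with eigenvalue `k`.
-/

open Finset

lemma sum_sum_sub_sq_le {κ : Type*} [Fintype κ] (y : κ → ℝ) :
    ∑ a, ∑ b, (y a - y b) ^ 2 ≤ 2 * Fintype.card κ * ∑ a, y a ^ 2 := by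
  have hexpand : ∑ a, ∑ b, (y a - y b) ^ 2 =
      2 * Fintype.card κ * ∑ a, y a ^ 2 - 2 * (∑ a, y a) ^ 2 := by
    simp only [sub_sq, sum_add_distrib, sum_sub_distrib, sum_const, card_univ, nsmul_eq_mul,
      ← mul_sum, ← sum_mul, sq (∑ a, y a)]
    ring
  nlinarith [sq_nonneg (∑ a, y a)]

namespace SimpleGraph

variable {V : Type*} [Fintype V]

/-- Twice the Laplacian quadratic form `xᵀ L x`: each edge is counted in both orientations. -/
def edgeEnergy (G : SimpleGraph V) [DecidableRel G.Adj] (x : V → ℝ) : ℝ :=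
  ∑ v, ∑ w, if G.Adj v w then (x v - x w) ^ 2 else 0

lemma lapMatrix_mulVec_apply_eq_sum_s15 [DecidableEq V] (G : SimpleGraph V) [DecidableRel G.Adj]
    (x : V → ℝ) (v : V) :
    (G.lapMatrix ℝ *ᵥ x) v = ∑ w, if G.Adj v w then x v - x w else 0 := by
  simp_rw [lapMatrix_mulVec_apply, degree_eq_sum_if_adj, sum_mul, neighborFinset_eq_filter,
    sum_filter, ← sum_sub_distrib]
  exact sum_congr rfl fun w _ => by split_ifs <;> ring

lemma lapMatrix_mulVec_eq_of_eq_sup [DecidableEq V] {G G₁ G₂ : SimpleGraph V}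
    [DecidableRel G.Adj] [DecidableRel G₁.Adj] (hG : G = G₁ ⊔ G₂) {x : V → ℝ}
    (hx : ∀ v w, G₂.Adj v w → x v = x w) :
    G.lapMatrix ℝ *ᵥ x = G₁.lapMatrix ℝ *ᵥ x := by
  ext v
  simp only [lapMatrix_mulVec_apply_eq_sum_s15]
  refine sum_congr rfl fun w _ => ?_
  have hadj : G.Adj v w ↔ G₁.Adj v w ∨ G₂.Adj v w := by rw [hG]; rfl
  by_cases h₁ : G₁.Adj v w
  · simp [h₁, hadj]
  · by_cases h₂ : G₂.Adj v w <;> simp [h₁, h₂, hadj, hx v w]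

lemma two_mul_mul_sum_sq_eq_edgeEnergy [DecidableEq V] {G : SimpleGraph V} [DecidableRel G.Adj]
    {x : V → ℝ} {μ : ℝ} (h : G.lapMatrix ℝ *ᵥ x = μ • x) :
    2 * μ * ∑ v, x v ^ 2 = G.edgeEnergy x := by
  have hform := G.lapMatrix_toLinearMap₂' ℝ x
  rw [Matrix.toLinearMap₂'_apply', h, dotProduct_smul, smul_eq_mul] at hform
  have hdot : x ⬝ᵥ x = ∑ v, x v ^ 2 := by simp only [dotProduct, sq]
  rw [edgeEnergy, ← hdot]
  linarith

lemma le_of_mem_eigSet_lapMatrix [DecidableEq V] {G : SimpleGraph V} [DecidableRel G.Adj]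
    {c μ : ℝ} (hE : ∀ x, G.edgeEnergy x ≤ 2 * c * ∑ v, x v ^ 2)
    (hμ : μ ∈ eigSet (G.lapMatrix ℝ)) : μ ≤ c := by
  obtain ⟨x, hx0, hx⟩ := hμ
  have hpos : 0 < ∑ v, x v ^ 2 := by
    obtain ⟨v, hv⟩ := Function.ne_iff.mp hx0
    exact sum_pos' (fun _ _ => sq_nonneg _) ⟨v, mem_univ v, sq_pos_of_ne_zero hv⟩
  have := two_mul_mul_sum_sq_eq_edgeEnergy hx ▸ hE x
  nlinarith

lemma edgeEnergy_le_add_of_le_sup {G G₁ G₂ : SimpleGraph V} [DecidableRel G.Adj]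
    [DecidableRel G₁.Adj] [DecidableRel G₂.Adj] (h : G ≤ G₁ ⊔ G₂) (x : V → ℝ) :
    G.edgeEnergy x ≤ G₁.edgeEnergy x + G₂.edgeEnergy x := by
  simp only [edgeEnergy, ← sum_add_distrib]
  gcongr with v _ w _
  have := @h v w
  split_ifs <;> simp_all <;> positivity

lemma sum_sum_ite_adj_eq_sum_degree_mul (G : SimpleGraph V) [DecidableRel G.Adj] (f : V → ℝ) :
    ∑ v, ∑ w, (if G.Adj v w then f v else 0) = ∑ v, G.degree v * f v := by
  simp_rw [degree_eq_sum_if_adj, sum_mul, ite_mul, one_mul, zero_mul]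

lemma edgeEnergy_le_of_degree_le {G : SimpleGraph V} [DecidableRel G.Adj] {d : ℕ}
    (hd : ∀ v, G.degree v ≤ d) (x : V → ℝ) : G.edgeEnergy x ≤ 4 * d * ∑ v, x v ^ 2 := by
  have hswap : ∀ f : V → ℝ, ∑ v, ∑ w, (if G.Adj v w then f w else 0) =
      ∑ v, ∑ w, (if G.Adj v w then f v else 0) := by
    intro f; rw [sum_comm]; simp_rw [G.adj_comm]
  calc G.edgeEnergy x
      ≤ ∑ v, ∑ w, ((if G.Adj v w then 2 * x v ^ 2 else 0) +
          if G.Adj v w then 2 * x w ^ 2 else 0) := by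
        unfold edgeEnergy
        gcongr with v _ w _
        split_ifs
        · nlinarith [sq_nonneg (x v + x w)]
        · simp
    _ = 4 * ∑ v, G.degree v * x v ^ 2 := by
        rw [sum_congr rfl fun v _ => sum_add_distrib, sum_add_distrib,
          hswap fun w => 2 * x w ^ 2, ← two_mul, sum_sum_ite_adj_eq_sum_degree_mul, mul_sum,
          mul_sum]
        exact sum_congr rfl fun v _ => by ring
    _ ≤ 4 * d * ∑ v, x v ^ 2 := by
        rw [mul_assoc]
        gcongr 4 * ?_
        rw [mul_sum]
        gcongr with v
        exact_mod_cast hd v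

instance {α β : Type*} [DecidableEq α] [DecidableEq β] (G : SimpleGraph α) (H : SimpleGraph β)
    [DecidableRel G.Adj] [DecidableRel H.Adj] : DecidableRel (G □ H).Adj :=
  fun _ _ => inferInstanceAs (Decidable (_ ∨ _))

section Cliques

variable {ι κ : Type*} [Fintype ι] [Fintype κ] [DecidableEq ι] [DecidableEq κ]

lemma sum_ite_bot_boxProd_top_adj (v : ι × κ) (f : ι × κ → ℝ) (hf : f v = 0) :
    ∑ w, (if ((⊥ : SimpleGraph ι) □ (⊤ : SimpleGraph κ)).Adj v w then f w else 0) =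
      ∑ b, f (v.1, b) := by
  rw [Fintype.sum_prod_type, sum_eq_single v.1]
  · refine sum_congr rfl fun b _ => ?_
    by_cases hb : v.2 = b
    · subst hb; simp [hf]
    · simp [hb]
  · intro i _ hi
    exact sum_eq_zero fun b _ => by simp [Ne.symm hi]
  · simp

lemma lapMatrix_bot_boxProd_top_mulVec_apply (x : ι × κ → ℝ) (v : ι × κ) :
    (((⊥ : SimpleGraph ι) □ (⊤ : SimpleGraph κ)).lapMatrix ℝ *ᵥ x) v =
      Fintype.card κ * x v - ∑ b, x (v.1, b) := by
  rw [lapMatrix_mulVec_apply_eq_sum_s15,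
    sum_ite_bot_boxProd_top_adj v (fun w => x v - x w) (sub_self _), sum_sub_distrib, sum_const,
    card_univ, nsmul_eq_mul]

lemma edgeEnergy_bot_boxProd_top_le (x : ι × κ → ℝ) :
    ((⊥ : SimpleGraph ι) □ (⊤ : SimpleGraph κ)).edgeEnergy x ≤
      2 * Fintype.card κ * ∑ v, x v ^ 2 := by
  rw [edgeEnergy, sum_congr rfl fun v _ =>
      sum_ite_bot_boxProd_top_adj v (fun w => (x v - x w) ^ 2) (by simp),
    Fintype.sum_prod_type, Fintype.sum_prod_type, mul_sum]
  exact sum_le_sum fun i _ => sum_sum_sub_sq_le fun a => x (i, a)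

end Cliques

lemma degree_fromRel_le_two [DecidableEq V] {r : V → V → Prop} [DecidableRel r]
    (hr₁ : ∀ v w w', r v w → r v w' → w = w')
    (hr₂ : ∀ v v' w, r v w → r v' w → v = v')
    (v : V) : (fromRel r).degree v ≤ 2 := by
  have hsub : (fromRel r).neighborFinset v ⊆ univ.filter (r v) ∪ univ.filter (r · v) := by
    intro w hw
    simpa [fromRel_adj] using ((fromRel r).mem_neighborFinset v w).mp hw |>.2
  calc (fromRel r).degree v
      ≤ #(univ.filter (r v)) + #(univ.filter (r · v)) :=
        (card_le_card hsub).trans (card_union_le _ _)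
    _ ≤ 1 + 1 := by
        gcongr <;> refine card_le_one.mpr fun a ha b hb => ?_ <;>
          simp only [mem_filter] at ha hb
        · exact hr₁ v a b ha.2 hb.2
        · exact hr₂ a b v ha.2 hb.2

end SimpleGraph

open SimpleGraph

abbrev hubRing (n k : ℕ) : SimpleGraph (Fin n × Fin k) :=
  fromRel fun v w => v.2.val = 0 ∧ w.2.val = 0 ∧ w.1.val = (v.1.val + 1) % n

lemma ringClique_eq_sup (n k : ℕ) :
    ringClique n k =
      ((⊥ : SimpleGraph (Fin n)) □ (⊤ : SimpleGraph (Fin k))) ⊔ hubRing n k := by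
  ext v w
  simp only [ringClique, hubRing, sup_adj, boxProd_adj, fromRel_adj, bot_adj, top_adj, ne_eq,
    Prod.ext_iff]
  tauto

lemma hubRing_degree_le_two (n k : ℕ) (v : Fin n × Fin k) : (hubRing n k).degree v ≤ 2 :=
  degree_fromRel_le_two
    (fun _ _ _ h h' =>
      Prod.ext (Fin.ext (h.2.2.trans h'.2.2.symm)) (Fin.ext (h.2.1.trans h'.2.1.symm)))
    (fun a b _ h h' => Prod.ext
      (Fin.ext <| Nat.ModEq.eq_of_lt_of_lt
        (Nat.ModEq.add_right_cancel' 1 (h.2.2.symm.trans h'.2.2)) a.1.isLt b.1.isLt)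
      (Fin.ext (h.1.trans h'.1.symm))) v

lemma eigenvalue_ringClique_le {n k : ℕ} {μ : ℝ}
    (hμ : μ ∈ eigSet ((ringClique n k).lapMatrix ℝ)) : μ ≤ k + 4 := by
  refine le_of_mem_eigSet_lapMatrix (fun x => ?_) hμ
  calc (ringClique n k).edgeEnergy x
      ≤ ((⊥ : SimpleGraph (Fin n)) □ (⊤ : SimpleGraph (Fin k))).edgeEnergy x +
          (hubRing n k).edgeEnergy x :=
        edgeEnergy_le_add_of_le_sup (ringClique_eq_sup n k).le x
    _ ≤ 2 * k * ∑ v, x v ^ 2 + 4 * (2 : ℕ) * ∑ v, x v ^ 2 := by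
        gcongr
        · simpa using edgeEnergy_bot_boxProd_top_le x
        · exact edgeEnergy_le_of_degree_le (hubRing_degree_le_two n k) x
    _ = 2 * (k + 4) * ∑ v, x v ^ 2 := by push_cast; ring

def hubVec (n k : ℕ) (v : Fin n × Fin k) : ℝ :=
  if v.2.val = 0 then 1 - k else 1

lemma sum_hubVec (n k : ℕ) (i : Fin n) : ∑ b, hubVec n k (i, b) = 0 := by
  cases k with
  | zero => simp
  | succ m => simp [hubVec, Fin.sum_univ_succ]

lemma hubVec_ne_zero {n k : ℕ} (hn : 0 < n) (hk : 2 ≤ k) : hubVec n k ≠ 0 := fun h => by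
  simpa [hubVec] using congrFun h (⟨0, hn⟩, ⟨1, hk⟩)

lemma lapMatrix_ringClique_mulVec_hubVec (n k : ℕ) :
    (ringClique n k).lapMatrix ℝ *ᵥ hubVec n k = (k : ℝ) • hubVec n k := by
  rw [lapMatrix_mulVec_eq_of_eq_sup (ringClique_eq_sup n k)
    fun v w ⟨_, h⟩ => by
      obtain ⟨hv, hw, _⟩ | ⟨hw, hv, _⟩ := h <;> simp [hubVec, hv, hw]]
  ext v
  rw [lapMatrix_bot_boxProd_top_mulVec_apply, sum_hubVec, Fintype.card_fin, sub_zero,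
    Pi.smul_apply, smul_eq_mul]

theorem lamMax_ringClique_bounds (n k : ℕ) (hn : 3 ≤ n) (hk : 2 ≤ k) :
    (k : ℝ) ≤ lamMax ((ringClique n k).lapMatrix ℝ) ∧
    lamMax ((ringClique n k).lapMatrix ℝ) ≤ (k : ℝ) + 4 := by
  have hk_mem : (k : ℝ) ∈ eigSet ((ringClique n k).lapMatrix ℝ) :=
    ⟨hubVec n k, hubVec_ne_zero (by omega) hk, lapMatrix_ringClique_mulVec_hubVec n k⟩
  have hbound : ∀ μ ∈ eigSet ((ringClique n k).lapMatrix ℝ), μ ≤ k + 4 :=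
    fun _ => eigenvalue_ringClique_le
  exact ⟨le_csSup ⟨_, hbound⟩ hk_mem, csSup_le ⟨_, hk_mem⟩ hbound⟩
end
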